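/- Let e : L → C be a canonical extension of a bounded lattice L. Let D^∧ be the collection of subsets of J∞(C) of the form ⋃_{a∈T} â for finite T ⊆ L, and D^∨ the collection of subsets of M∞(C) of the form ⋃_{a∈T} ǎ for finite T ⊆ L. Define u(V) := {y ∈ M∞(C) : ∀x ∈ V, x ≤ y} and l(W) := {x ∈ J∞(C) : ∀y ∈ W, x ≤ y}. Then: (1) for finite T ⊆ L, u(⋃_{a∈T} â) = (⋁T)ˇ, so u maps D^∧ into D^∨, and dually l maps D^∨ into D^∧; (2) for V ∈ D^∧ and W ∈ D^∨, W ⊆ u(V) if and only if V ⊆ l(W) (a Galois connection); (3) the set of Galois-closed elements {V ∈ D^∧ : l(u(V)) = V}, ordered by inclusion, is order-isomorphic to L via a ↦ â. -/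

import Mathlib

/-- A finite subset `M` of a bounded lattice is join-admissible if its join
distributes over all meets with elements of the lattice. -/
def JoinAdmissible {L : Type*} [Lattice L] [BoundedOrder L] (M : Finset L) : Prop :=
  ∀ a : L, a ⊓ M.sup id = M.sup fun m => a ⊓ m

/-- An a-ideal: a downward-closed subset closed under admissible joins. -/
def IsAIdeal {L : Type*} [Lattice L] [BoundedOrder L] (A : Set L) : Prop :=
  (∀ a ∈ A, ∀ b, b ≤ a → b ∈ A) ∧
  ∀ M : Finset L, ↑M ⊆ A → JoinAdmissible M → M.sup id ∈ A

/-- The smallest a-ideal containing `T`. -/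
def aIdealGen {L : Type*} [Lattice L] [BoundedOrder L] (T : Set L) : Set L :=
  ⋂₀ {A : Set L | IsAIdeal A ∧ T ⊆ A}

/-- An element `x` of a complete lattice is completely join-irreducible if
`x ∈ S` whenever `x = ⨆ S`. -/
def CompletelyJoinIrreducible {C : Type*} [CompleteLattice C] (x : C) : Prop :=
  ∀ S : Set C, x = sSup S → x ∈ S

/-- An element `y` of a complete lattice is completely meet-irreducible if
`y ∈ S` whenever `y = ⨅ S`. -/
def CompletelyMeetIrreducible {C : Type*} [CompleteLattice C] (y : C) : Prop :=
  ∀ S : Set C, y = sInf S → y ∈ S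

/-- `e : L → C` is a canonical extension of the bounded lattice `L`: an injective
bounded-lattice homomorphism into a complete lattice `C` which is dense and compact. -/
def IsCanonicalExtension {L C : Type*} [Lattice L] [BoundedOrder L] [CompleteLattice C]
    (e : L → C) : Prop :=
  Function.Injective e ∧
  (∀ a b : L, e (a ⊓ b) = e a ⊓ e b) ∧
  (∀ a b : L, e (a ⊔ b) = e a ⊔ e b) ∧
  e ⊥ = ⊥ ∧ e ⊤ = ⊤ ∧
  -- denseness
  (∀ u : C,
    u = sSup {v : C | ∃ S : Set L, v = sInf (e '' S) ∧ v ≤ u} ∧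
    u = sInf {v : C | ∃ T : Set L, v = sSup (e '' T) ∧ u ≤ v}) ∧
  -- compactness
  (∀ S T : Set L, sInf (e '' S) ≤ sSup (e '' T) →
    ∃ S' T' : Finset L, ↑S' ⊆ S ∧ ↑T' ⊆ T ∧ S'.inf id ≤ T'.sup id)

/-- `â`: the completely join-irreducible elements of `C` below `e a`. -/
def hatSet {L C : Type*} [Lattice L] [BoundedOrder L] [CompleteLattice C]
    (e : L → C) (a : L) : Set C :=
  {x : C | CompletelyJoinIrreducible x ∧ x ≤ e a}

/-- `ǎ`: the completely meet-irreducible elements of `C` above `e a`. -/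
def checkSet {L C : Type*} [Lattice L] [BoundedOrder L] [CompleteLattice C]
    (e : L → C) (a : L) : Set C :=
  {y : C | CompletelyMeetIrreducible y ∧ e a ≤ y}

/-- `u(V) = {y ∈ M∞(C) : ∀ x ∈ V, x ≤ y}`. -/
def uMap {C : Type*} [CompleteLattice C] (V : Set C) : Set C :=
  {y : C | CompletelyMeetIrreducible y ∧ ∀ x ∈ V, x ≤ y}

/-- `l(W) = {x ∈ J∞(C) : ∀ y ∈ W, x ≤ y}`. -/
def lMap {C : Type*} [CompleteLattice C] (W : Set C) : Set C :=
  {x : C | CompletelyJoinIrreducible x ∧ ∀ y ∈ W, x ≤ y}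

/-!
The key fact is that `J∞(C)` is join-dense in `C`, so that `e a = ⋁ â` and dually
`e a = ⋀ ǎ`. Given a closed element `⋀ e[S]` not below an open element `⋁ e[T]`, Zorn's
lemma (applicable because compactness makes this condition of finite character) enlarges
`S` to a `G ⊆ L` maximal with `⋀ e[G] ≰ ⋁ e[T]`, and `x = ⋀ e[G]` is completely
join-irreducible: if `s < x`, every closed `q = ⋀ e[S'] ≤ s` has some `c ∈ S' \ G`
(otherwise `x ≤ q`), so maximality gives `q ≤ e c ⊓ x ≤ ⋁ e[T]`; by density
`s ≤ ⋁ e[T]`, and a join of such `s` cannot be `x`. Once `e a = ⋁ â`, the identity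
`u(⋃_{a∈T} â) = (⋁ T)ˇ`, its dual, and the isomorphism `a ↦ â` are direct.
-/

namespace IsCanonicalExtension

variable {L C : Type*} [Lattice L] [BoundedOrder L] [CompleteLattice C] {e : L → C}

def toBoundedLatticeHom (h : IsCanonicalExtension e) : BoundedLatticeHom L C where
  toFun := e
  map_sup' := h.2.2.1
  map_inf' := h.2.1
  map_top' := h.2.2.2.2.1
  map_bot' := h.2.2.2.1

lemma monotone (h : IsCanonicalExtension e) : Monotone e :=
  OrderHomClass.mono h.toBoundedLatticeHom

lemma le_iff_le (h : IsCanonicalExtension e) {a b : L} : e a ≤ e b ↔ a ≤ b := by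
  refine ⟨fun hab => inf_eq_left.mp (h.1 ?_), fun hab => h.monotone hab⟩
  rw [h.2.1, inf_eq_left.mpr hab]

lemma map_finset_sup (h : IsCanonicalExtension e) (T : Finset L) :
    e (T.sup id) = T.sup e :=
  _root_.map_finset_sup h.toBoundedLatticeHom T id

lemma map_finset_inf (h : IsCanonicalExtension e) (T : Finset L) :
    e (T.inf id) = T.inf e :=
  _root_.map_finset_inf h.toBoundedLatticeHom T id

lemma dual (h : IsCanonicalExtension e) :
    IsCanonicalExtension (OrderDual.toDual ∘ e ∘ OrderDual.ofDual : Lᵒᵈ → Cᵒᵈ) := by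
  obtain ⟨hinj, hinf, hsup, hbot, htop, hdense, hcompact⟩ := h
  refine ⟨hinj, fun a b => hsup _ _, fun a b => hinf _ _, htop, hbot,
    fun u => (hdense u).symm, fun S T hST => ?_⟩
  obtain ⟨T', S', hT', hS', hle⟩ := hcompact T S hST
  exact ⟨S', T', hS', hT', hle⟩

lemma eq_sSup_closed_le (h : IsCanonicalExtension e) (u : C) :
    u = sSup {v | ∃ S : Set L, v = sInf (e '' S) ∧ v ≤ u} :=
  (h.2.2.2.2.2.1 u).1

lemma eq_sInf_open_ge (h : IsCanonicalExtension e) (u : C) :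
    u = sInf {v | ∃ T : Set L, v = sSup (e '' T) ∧ u ≤ v} :=
  (h.2.2.2.2.2.1 u).2

lemma sInf_image_le_sSup_image_iff (h : IsCanonicalExtension e) {S T : Set L} :
    sInf (e '' S) ≤ sSup (e '' T) ↔
      ∃ S' T' : Finset L, ↑S' ⊆ S ∧ ↑T' ⊆ T ∧ S'.inf id ≤ T'.sup id := by
  refine ⟨h.2.2.2.2.2.2 S T, ?_⟩
  rintro ⟨S', T', hS', hT', hle⟩
  calc sInf (e '' S) ≤ sInf (e '' S') := sInf_le_sInf (Set.image_mono hS')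
    _ = e (S'.inf id) := by rw [h.map_finset_inf, Finset.inf_eq_sInf_image]
    _ ≤ e (T'.sup id) := h.monotone hle
    _ = sSup (e '' T') := by rw [h.map_finset_sup, Finset.sup_eq_sSup_image]
    _ ≤ sSup (e '' T) := sSup_le_sSup (Set.image_mono hT')

lemma exists_maximal_not_sInf_image_le (h : IsCanonicalExtension e) {S T : Set L}
    (hST : ¬ sInf (e '' S) ≤ sSup (e '' T)) :
    ∃ G, S ⊆ G ∧ Maximal (fun G => ¬ sInf (e '' G) ≤ sSup (e '' T)) G := by
  refine zorn_subset_nonempty {G | ¬ sInf (e '' G) ≤ sSup (e '' T)}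
    (fun c hc hchain hne => ⟨⋃₀ c, ?_, fun _ => Set.subset_sUnion_of_mem⟩) S hST
  rw [Set.mem_ofPred, h.sInf_image_le_sSup_image_iff]
  rintro ⟨G₀, T₀, hG₀, hT₀, hle⟩
  obtain ⟨D, hDc, hG₀D⟩ :=
    hchain.directedOn.exists_mem_subset_of_finite_of_subset_sUnion hne G₀.finite_toSet hG₀
  exact hc hDc (h.sInf_image_le_sSup_image_iff.mpr ⟨G₀, T₀, hG₀D, hT₀, hle⟩)

lemma completelyJoinIrreducible_sInf_image_of_maximal (h : IsCanonicalExtension e)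
    {T G : Set L} (hG : Maximal (fun G => ¬ sInf (e '' G) ≤ sSup (e '' T)) G) :
    CompletelyJoinIrreducible (sInf (e '' G)) := by
  set x := sInf (e '' G)
  set v := sSup (e '' T)
  intro SS hx
  by_contra hxSS
  suffices ∀ s ∈ SS, s ≤ v from hG.prop (hx.le.trans (sSup_le this))
  intro s hs
  have hsx : s ≤ x := hx ▸ le_sSup hs
  rw [h.eq_sSup_closed_le s]
  refine sSup_le ?_
  rintro _ ⟨S', rfl, hqs⟩
  by_cases hS'G : S' ⊆ G
  · have : s = x := le_antisymm hsx ((sInf_le_sInf (Set.image_mono hS'G)).trans hqs)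
    exact absurd (this ▸ hs) hxSS
  · obtain ⟨c, hcS', hcG⟩ := Set.not_subset.mp hS'G
    have hcx : e c ⊓ x ≤ v := by
      have := hG.not_prop_of_ssuperset (Set.ssubset_insert hcG)
      rwa [not_not, Set.image_insert_eq, sInf_insert] at this
    exact (le_inf (sInf_le (Set.mem_image_of_mem e hcS')) (hqs.trans hsx)).trans hcx

lemma exists_completelyJoinIrreducible_le_not_le (h : IsCanonicalExtension e) {S T : Set L}
    (hST : ¬ sInf (e '' S) ≤ sSup (e '' T)) :
    ∃ x, CompletelyJoinIrreducible x ∧ x ≤ sInf (e '' S) ∧ ¬ x ≤ sSup (e '' T) := by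
  obtain ⟨G, hSG, hG⟩ := h.exists_maximal_not_sInf_image_le hST
  exact ⟨_, h.completelyJoinIrreducible_sInf_image_of_maximal hG,
    sInf_le_sInf (Set.image_mono hSG), hG.prop⟩

lemma sSup_completelyJoinIrreducible_le (h : IsCanonicalExtension e) (u : C) :
    sSup {x | CompletelyJoinIrreducible x ∧ x ≤ u} = u := by
  set u' := sSup {x | CompletelyJoinIrreducible x ∧ x ≤ u}
  refine le_antisymm (sSup_le fun x hx => hx.2) ?_
  by_contra hu
  obtain ⟨S, hSu, hSu'⟩ : ∃ S : Set L, sInf (e '' S) ≤ u ∧ ¬ sInf (e '' S) ≤ u' := by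
    by_contra! hc
    refine hu ((h.eq_sSup_closed_le u).trans_le (sSup_le ?_))
    rintro _ ⟨S, rfl, hSu⟩
    exact hc S hSu
  obtain ⟨T, hu'T, hST⟩ :
      ∃ T : Set L, u' ≤ sSup (e '' T) ∧ ¬ sInf (e '' S) ≤ sSup (e '' T) := by
    by_contra! hc
    refine hSu' ((le_sInf ?_).trans_eq (h.eq_sInf_open_ge u').symm)
    rintro _ ⟨T, rfl, hu'T⟩
    exact hc T hu'T
  obtain ⟨x, hxJ, hxS, hxT⟩ := h.exists_completelyJoinIrreducible_le_not_le hST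
  have hxu' : x ≤ u' := le_sSup ⟨hxJ, hxS.trans hSu⟩
  exact hxT (hxu'.trans hu'T)

lemma sSup_hatSet (h : IsCanonicalExtension e) (a : L) : sSup (hatSet e a) = e a :=
  h.sSup_completelyJoinIrreducible_le (e a)

lemma uMap_iUnion_hatSet (h : IsCanonicalExtension e) (T : Finset L) :
    uMap (⋃ a ∈ T, hatSet e a) = checkSet e (T.sup id) := by
  ext y
  simp only [uMap, checkSet, Set.mem_ofPred, Set.mem_iUnion₂]
  refine and_congr_right fun _ => ⟨fun hy => ?_, ?_⟩
  · rw [h.map_finset_sup, Finset.sup_le_iff]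
    intro a ha
    rw [← h.sSup_hatSet a]
    exact sSup_le fun x hx => hy x ⟨a, ha, hx⟩
  · rintro hy x ⟨a, ha, hx⟩
    exact hx.2.trans ((h.monotone (Finset.le_sup (f := id) ha)).trans hy)

lemma lMap_iUnion_checkSet (h : IsCanonicalExtension e) (T : Finset L) :
    lMap (⋃ a ∈ T, checkSet e a) = hatSet e (T.inf id) :=
  h.dual.uMap_iUnion_hatSet (L := Lᵒᵈ) T

lemma lMap_checkSet (h : IsCanonicalExtension e) (a : L) :
    lMap (checkSet e a) = hatSet e a := by
  simpa using h.lMap_iUnion_checkSet {a}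

lemma uMap_hatSet (h : IsCanonicalExtension e) (a : L) : uMap (hatSet e a) = checkSet e a :=
  h.dual.lMap_checkSet (L := Lᵒᵈ) a

lemma hatSet_subset_hatSet_iff (h : IsCanonicalExtension e) {a b : L} :
    hatSet e a ⊆ hatSet e b ↔ a ≤ b := by
  refine ⟨fun hab => ?_, fun hab x hx => ⟨hx.1, hx.2.trans (h.monotone hab)⟩⟩
  rw [← h.le_iff_le, ← h.sSup_hatSet a, ← h.sSup_hatSet b]
  exact sSup_le_sSup hab

end IsCanonicalExtension

lemma subset_uMap_iff_subset_lMap {C : Type*} [CompleteLattice C] {V W : Set C}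
    (hV : V ⊆ {x | CompletelyJoinIrreducible x}) (hW : W ⊆ {y | CompletelyMeetIrreducible y}) :
    W ⊆ uMap V ↔ V ⊆ lMap W :=
  ⟨fun hWV x hx => ⟨hV hx, fun _ hy => (hWV hy).2 x hx⟩,
    fun hVW y hy => ⟨hW hy, fun _ hx => (hVW hx).2 y hy⟩⟩

/-- The Galois connection between the distributive envelopes induced by a canonical
extension, whose lattice of Galois-closed sets is isomorphic to `L`. -/
theorem galoisConnection_distributiveEnvelopes {L C : Type*} [Lattice L] [BoundedOrder L]
    [CompleteLattice C] (e : L → C) (h : IsCanonicalExtension e) :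
    -- (1) `u` maps `D^∧` into `D^∨` via `u(⋃_{a ∈ T} â) = (⋁ T)ˇ`, and dually for `l`
    (∀ T : Finset L, uMap (⋃ a ∈ T, hatSet e a) = checkSet e (T.sup id)) ∧
    (∀ V : Set C, (∃ T : Finset L, V = ⋃ a ∈ T, hatSet e a) →
      ∃ U : Finset L, uMap V = ⋃ a ∈ U, checkSet e a) ∧
    (∀ W : Set C, (∃ T : Finset L, W = ⋃ a ∈ T, checkSet e a) →
      ∃ U : Finset L, lMap W = ⋃ a ∈ U, hatSet e a) ∧
    -- (2) Galois connection
    (∀ V W : Set C, (∃ T : Finset L, V = ⋃ a ∈ T, hatSet e a) →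
      (∃ T : Finset L, W = ⋃ a ∈ T, checkSet e a) →
      (W ⊆ uMap V ↔ V ⊆ lMap W)) ∧
    -- (3) the Galois-closed elements of `D^∧`, ordered by inclusion, form a lattice
    -- isomorphic to `L`, via `a ↦ â`
    ∃ φ : L ≃o {V : Set C //
        (∃ T : Finset L, V = ⋃ a ∈ T, hatSet e a) ∧ lMap (uMap V) = V},
      ∀ a : L, (φ a : Set C) = hatSet e a := by
  let hatEmb : L ↪o {V : Set C //
      (∃ T : Finset L, V = ⋃ a ∈ T, hatSet e a) ∧ lMap (uMap V) = V} :=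
    OrderEmbedding.ofMapLEIff
      (fun a => ⟨hatSet e a, ⟨{a}, by simp⟩, by rw [h.uMap_hatSet, h.lMap_checkSet]⟩)
      fun _ _ => h.hatSet_subset_hatSet_iff
  have hatEmb_surjective : Function.Surjective hatEmb := by
    rintro ⟨_, ⟨T, rfl⟩, hclosed⟩
    refine ⟨T.sup id, Subtype.ext ?_⟩
    change hatSet e (T.sup id) = ⋃ a ∈ T, hatSet e a
    rw [← hclosed, h.uMap_iUnion_hatSet, h.lMap_checkSet]
  refine ⟨h.uMap_iUnion_hatSet, ?_, ?_, ?_,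
    RelIso.ofSurjective hatEmb hatEmb_surjective, fun _ => rfl⟩
  · rintro V ⟨T, rfl⟩
    exact ⟨{T.sup id}, by simp [h.uMap_iUnion_hatSet]⟩
  · rintro W ⟨T, rfl⟩
    exact ⟨{T.inf id}, by simp [h.lMap_iUnion_checkSet]⟩
  · rintro V W ⟨T, rfl⟩ ⟨U, rfl⟩
    exact subset_uMap_iff_subset_lMap (Set.iUnion₂_subset fun _ _ _ hx => hx.1)
      (Set.iUnion₂_subset fun _ _ _ hy => hy.1)
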